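/- Let G be a group, φ : G → ℤⁿ a surjective homomorphism, ρ : G → GL(l, ℂ) a representation, and α : ℤⁿ → ℂ an additive homomorphism, factored as α = α̃ ∘ p where p : ℤⁿ → ℤᵐ is surjective and α̃ : ℤᵐ → ℂ is injective. Define the formal exponential deformation γ̂ : G → GL(l, ℂ[[t]]) by γ̂(g) = exp(t·α(φ(g)))·ρ(g). Then for every bounded chain complex C_* of finitely generated free right ℤ[G]-modules and every k, the dimension over the field ℂ((t)) of formal Laurent series of H_k(C_* ⊗_{ℤ[G], γ̂} ℂ((t))^l) equals b_k(C_*, ρ; p), the dimension over the fraction field of ℂ[ℤᵐ] of H_k(C_* ⊗_{ℤ[G], ρ_p} {ℂ[ℤᵐ]}^l). -/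

import Mathlib

/-!
Substituting `x ↦ exp(t·α̃(x))` is a `ℂ`-algebra map `ℂ[ℤᵐ] → ℂ[[t]]` carrying `ρ_p` to `γ̂`. It is
injective because exponentials `exp(βt)` with distinct `β` are linearly independent: their Taylor
coefficient sequences `n ↦ βⁿ` are distinct characters of `ℕ`. An injective map of domains extends
to their fraction fields, and the rank of a matrix does not change under a field extension, so
every boundary rank, hence every Betti number, is the same for `γ̂` and for `ρ_p`.
-/

/-- A finite free chain complex `0 ← C_0 ← C_1 ← ⋯ ← C_N ← 0` over a ring `T`,
recorded by the ranks `c k` of its finitely generated free chain modules and the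
matrices of its boundary operators; `d k` is the matrix of `∂_{k+1} : C_{k+1} → C_k`. -/
structure FinFreeChainComplex (T : Type) [Ring T] where
  N : ℕ
  c : ℕ → ℕ
  bounded : ∀ k : ℕ, N < k → c k = 0
  d : ∀ k : ℕ, Matrix (Fin (c k)) (Fin (c (k + 1))) T
  dsq : ∀ k : ℕ, d k * d (k + 1) = 0

/-- The rank, over the fraction field `{U}` of `U`, of the matrix of `∂_{k+1}`
with entries mapped by the ring homomorphism `φ : T →+* U`. -/
noncomputable def FinFreeChainComplex.bdryRank {T U : Type} [Ring T] [CommRing U]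
    (C : FinFreeChainComplex T) (φ : T →+* U) (k : ℕ) : ℕ :=
  ((C.d k).map ⇑((algebraMap U (FractionRing U)).comp φ)).rank

/-- The rank, over `{U}`, of the matrix of `∂_k : C_k → C_{k-1}` (with `∂_0 = 0`)
with entries mapped by `φ`. -/
noncomputable def FinFreeChainComplex.bdryRankAt {T U : Type} [Ring T] [CommRing U]
    (C : FinFreeChainComplex T) (φ : T →+* U) (k : ℕ) : ℕ :=
  match k with
  | 0 => 0
  | k' + 1 => C.bdryRank φ k'

/-- `b_k(C_*, φ) = dim_{{U}} H_k(C_* ⊗_φ {U}) = c_k − rk φ(∂_k) − rk φ(∂_{k+1})`. -/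
noncomputable def FinFreeChainComplex.bettiMap {T U : Type} [Ring T] [CommRing U]
    (C : FinFreeChainComplex T) (φ : T →+* U) (k : ℕ) : ℕ :=
  C.c k - C.bdryRankAt φ k - C.bdryRank φ k

/-- `b_k(C_*) = dim_{{T}} H_k(C_* ⊗_T {T})`. -/
noncomputable def FinFreeChainComplex.betti {T : Type} [CommRing T]
    (C : FinFreeChainComplex T) (k : ℕ) : ℕ :=
  C.bettiMap (RingHom.id T) k


/-- Flattening of a block matrix: a matrix of `l × l` matrices becomes an ordinary matrix. -/
def blockFlatten {a b l : ℕ} {S : Type}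
    (M : Matrix (Fin a) (Fin b) (Matrix (Fin l) (Fin l) S)) :
    Matrix (Fin a × Fin l) (Fin b × Fin l) S :=
  Matrix.of fun ik jl => M ik.1 jl.1 ik.2 jl.2

/-- The ring homomorphism `ℤ[G] → Mat_l(S)` induced by a representation
`τ : G →* GL(l, S)`. -/
noncomputable def reprMatRingHom {G : Type} [Group G] {l : ℕ} {S : Type} [CommRing S]
    (τ : G →* GL (Fin l) S) : MonoidAlgebra ℤ G →+* Matrix (Fin l) (Fin l) S :=
  ((MonoidAlgebra.lift ℤ (Matrix (Fin l) (Fin l) S) G)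
    ((Units.coeHom (Matrix (Fin l) (Fin l) S)).comp τ)).toRingHom

/-- The rank over the fraction field `{S}` of the matrix of `∂_{k+1} ⊗ 1` in the
complex `C_* ⊗_{ℤ[G], τ} {S}^l`. -/
noncomputable def reprBdryRank {G : Type} [Group G] {l : ℕ} {S : Type} [CommRing S]
    (C : FinFreeChainComplex (MonoidAlgebra ℤ G)) (τ : G →* GL (Fin l) S) (k : ℕ) : ℕ :=
  ((blockFlatten ((C.d k).map ⇑(reprMatRingHom τ))).map
    ⇑(algebraMap S (FractionRing S))).rank

/-- The rank over `{S}` of the matrix of `∂_k ⊗ 1` (with `∂_0 = 0`). -/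
noncomputable def reprBdryRankAt {G : Type} [Group G] {l : ℕ} {S : Type} [CommRing S]
    (C : FinFreeChainComplex (MonoidAlgebra ℤ G)) (τ : G →* GL (Fin l) S) (k : ℕ) : ℕ :=
  match k with
  | 0 => 0
  | k' + 1 => reprBdryRank C τ k'

/-- `b_k(C_*, τ) = dim_{{S}} H_k(C_* ⊗_{ℤ[G], τ} {S}^l)` for a representation
`τ : G →* GL(l, S)` into an integral domain `S`. -/
noncomputable def reprBetti {G : Type} [Group G] {l : ℕ} {S : Type} [CommRing S]
    (C : FinFreeChainComplex (MonoidAlgebra ℤ G)) (τ : G →* GL (Fin l) S) (k : ℕ) : ℕ :=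
  C.c k * l - reprBdryRankAt C τ k - reprBdryRank C τ k

/-- The homomorphism `GL(l, S) →* GL(l, S')` induced by a ring homomorphism `S →+* S'`. -/
def glMap {l : ℕ} {S S' : Type} [CommRing S] [CommRing S'] (f : S →+* S') :
    GL (Fin l) S →* GL (Fin l) S' :=
  Units.map f.mapMatrix.toMonoidHom

/-- The formal power series `exp(βt) = Σ_{n≥0} βⁿtⁿ/n! ∈ ℂ[[t]]`. -/
noncomputable def expPS (β : ℂ) : PowerSeries ℂ :=
  PowerSeries.mk fun n => β ^ n / (n.factorial : ℂ)

open Submodule in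
theorem Matrix.rank_map_ringHom {K L : Type*} [Field K] [Field L] (f : K →+* L)
    {m n : Type*} [Finite m] [Fintype n] (M : Matrix m n K) : (M.map f).rank = M.rank := by
  let := f.toAlgebra
  -- a set of columns forming a basis of the column space over `K` still does so over `L`
  obtain ⟨κ, a, ha, hspan, hli⟩ := exists_linearIndependent' K M.col
  have : Fintype κ := Fintype.ofInjective a ha
  have hli' : LinearIndependent L ((M.map f).col ∘ a) :=
    linearIndependent_algebraMap_comp_iff.mpr hli
  have hspan' : span L (Set.range ((M.map f).col ∘ a)) = span L (Set.range (M.map f).col) := by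
    refine le_antisymm (span_mono (Set.range_comp_subset_range _ _)) (span_le.mpr ?_)
    rintro _ ⟨j, rfl⟩
    have hj : M.col j ∈ span K (Set.range (M.col ∘ a)) := hspan ▸ subset_span ⟨j, rfl⟩
    have := apply_mem_span_image_of_mem_span ((Algebra.linearMap K L).compLeft m) hj
    rw [← Set.range_comp] at this
    exact span_le_restrictScalars K L _ this
  rw [rank_eq_finrank_span_cols, rank_eq_finrank_span_cols, ← hspan, ← hspan',
    finrank_span_eq_card hli, finrank_span_eq_card hli']

section GLMap

variable {G : Type} [Group G] {l : ℕ} {S S' : Type} [CommRing S] [CommRing S']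

theorem reprMatRingHom_glMap_comp (f : S →+* S') (τ : G →* GL (Fin l) S) :
    reprMatRingHom ((glMap f).comp τ) = f.mapMatrix.comp (reprMatRingHom τ) := by
  apply MonoidAlgebra.ringHom_ext <;> intro <;> simp [reprMatRingHom, glMap]

variable [IsDomain S] [IsDomain S']

theorem reprBdryRank_glMap_comp {f : S →+* S'} (hf : Function.Injective f)
    (C : FinFreeChainComplex (MonoidAlgebra ℤ G)) (τ : G →* GL (Fin l) S) (k : ℕ) :
    reprBdryRank C ((glMap f).comp τ) k = reprBdryRank C τ k := by
  have hg : Function.Injective ((algebraMap S' (FractionRing S')).comp f) :=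
    (IsFractionRing.injective S' (FractionRing S')).comp hf
  let F : FractionRing S →+* FractionRing S' := IsFractionRing.lift hg
  have hF (x : S) : F (algebraMap S (FractionRing S) x) = algebraMap S' (FractionRing S') (f x) :=
    IsFractionRing.lift_algebraMap hg x
  let B := blockFlatten ((C.d k).map (reprMatRingHom τ))
  have hB : blockFlatten ((C.d k).map (reprMatRingHom ((glMap f).comp τ))) = B.map f := by
    rw [reprMatRingHom_glMap_comp]; rfl
  calc reprBdryRank C ((glMap f).comp τ) k
      = ((B.map (algebraMap S (FractionRing S))).map F).rank := by
        rw [reprBdryRank, hB, Matrix.map_map, Matrix.map_map]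
        congr 1
        ext i j
        exact (hF _).symm
    _ = reprBdryRank C τ k := Matrix.rank_map_ringHom F _

theorem reprBetti_glMap_comp {f : S →+* S'} (hf : Function.Injective f)
    (C : FinFreeChainComplex (MonoidAlgebra ℤ G)) (τ : G →* GL (Fin l) S) (k : ℕ) :
    reprBetti C ((glMap f).comp τ) k = reprBetti C τ k := by
  cases k <;> simp only [reprBetti, reprBdryRankAt, reprBdryRank_glMap_comp hf]

end GLMap

theorem coeff_expPS (β : ℂ) (n : ℕ) : PowerSeries.coeff n (expPS β) = β ^ n / n.factorial := by
  simp [expPS]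

theorem expPS_eq_rescale_exp (β : ℂ) : expPS β = PowerSeries.rescale β (PowerSeries.exp ℂ) := by
  ext n
  simp [coeff_expPS, PowerSeries.coeff_rescale, PowerSeries.coeff_exp, div_eq_mul_inv]

theorem expPS_zero : expPS 0 = 1 := by
  rw [expPS_eq_rescale_exp, PowerSeries.rescale_zero]
  simp

theorem expPS_add (a b : ℂ) : expPS (a + b) = expPS a * expPS b := by
  simp only [expPS_eq_rescale_exp, PowerSeries.exp_mul_exp_eq_exp_add]

/-- Indexed by `Multiplicative ℕ` so that `exp(βt)` goes to the character `n ↦ βⁿ`, which brings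
Dedekind's independence of characters to bear on exponentials. -/
noncomputable def taylorCoeffs : PowerSeries ℂ →ₗ[ℂ] Multiplicative ℕ → ℂ :=
  LinearMap.pi fun n => (n.toAdd.factorial : ℂ) • PowerSeries.coeff n.toAdd

theorem linearIndependent_expPS : LinearIndependent ℂ expPS := by
  have h : taylorCoeffs ∘ expPS = fun β => ⇑(powersHom ℂ β) := by
    ext β n
    simp only [Function.comp_apply, taylorCoeffs, LinearMap.pi_apply, LinearMap.smul_apply,
      coeff_expPS, smul_eq_mul, powersHom_apply]
    exact mul_div_cancel₀ _ (Nat.cast_ne_zero.mpr (Nat.factorial_ne_zero _))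
  refine LinearIndependent.of_comp taylorCoeffs ?_
  rw [h]
  exact (linearIndependent_monoidHom (Multiplicative ℕ) ℂ).comp _ (powersHom ℂ).injective

noncomputable def expPSHom : Multiplicative ℂ →* PowerSeries ℂ where
  toFun β := expPS β.toAdd
  map_one' := expPS_zero
  map_mul' a b := expPS_add a.toAdd b.toAdd

section ExpAlgHom

variable {M : Type} [AddMonoid M]

noncomputable def expAlgHom (β : M →+ ℂ) : AddMonoidAlgebra ℂ M →ₐ[ℂ] PowerSeries ℂ :=
  AddMonoidAlgebra.lift ℂ (PowerSeries ℂ) M (expPSHom.comp β.toMultiplicative)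

theorem expAlgHom_single (β : M →+ ℂ) (x : M) (c : ℂ) :
    expAlgHom β (AddMonoidAlgebra.single x c) = c • expPS (β x) := by
  simp [expAlgHom, expPSHom]

theorem expAlgHom_injective {β : M →+ ℂ} (hβ : Function.Injective β) :
    Function.Injective (expAlgHom β) := by
  have h : (expAlgHom β).toLinearMap =
      (AddMonoidAlgebra.basis M ℂ).constr ℂ (expPS ∘ β) :=
    (AddMonoidAlgebra.basis M ℂ).ext fun x => by
      rw [Module.Basis.constr_basis, AddMonoidAlgebra.basis_apply, AlgHom.toLinearMap_apply,
        expAlgHom_single, one_smul, Function.comp_apply]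
  change Function.Injective (expAlgHom β).toLinearMap
  rw [h]
  exact (AddMonoidAlgebra.basis M ℂ).injective_constr_of_linearIndependent (R₂ := ℂ)
    (linearIndependent_expPS.comp β hβ)

end ExpAlgHom

theorem betti_formal_exponential_deformation_general
    {G : Type} [Group G] {n m l : ℕ}
    (φ : G →* Multiplicative (Fin n → ℤ))
    (ρ : G →* GL (Fin l) ℂ)
    (α : (Fin n → ℤ) →+ ℂ)
    (p : (Fin n → ℤ) →+ (Fin m → ℤ))
    (αt : (Fin m → ℤ) →+ ℂ) (hαt : Function.Injective αt)
    (hfact : α = αt.comp p)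
    (γ : G →* GL (Fin l) (PowerSeries ℂ))
    (hγ : ∀ g : G, (γ g : Matrix (Fin l) (Fin l) (PowerSeries ℂ)) =
      expPS (α (Multiplicative.toAdd (φ g))) •
        ((ρ g : Matrix (Fin l) (Fin l) ℂ).map ⇑(PowerSeries.C (R := ℂ))))
    (ρp : G →* GL (Fin l) (AddMonoidAlgebra ℂ (Fin m → ℤ)))
    (hρp : ∀ g : G, (ρp g : Matrix (Fin l) (Fin l) (AddMonoidAlgebra ℂ (Fin m → ℤ))) =
      AddMonoidAlgebra.single (p (Multiplicative.toAdd (φ g))) (1 : ℂ) •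
        ((ρ g : Matrix (Fin l) (Fin l) ℂ).map
          ⇑(algebraMap ℂ (AddMonoidAlgebra ℂ (Fin m → ℤ)))))
    (C : FinFreeChainComplex (MonoidAlgebra ℤ G)) (k : ℕ) :
    reprBetti C γ k = reprBetti C ρp k := by
  have hγρp : γ = (glMap (expAlgHom αt : _ →+* PowerSeries ℂ)).comp ρp := by
    ext g i j
    simp [glMap, hγ, hρp, hfact, expAlgHom_single, mul_comm]
  rw [hγρp]
  exact reprBetti_glMap_comp (expAlgHom_injective hαt) C ρp k

/-- let `G` be a group, `φ : G → ℤⁿ` surjective, `ρ : G → GL(l, ℂ)` a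
representation, `α : ℤⁿ → ℂ` factored as `α = α̃ ∘ p` with `p : ℤⁿ → ℤᵐ` surjective and
`α̃ : ℤᵐ → ℂ` injective.  Let `γ̂ : G → GL(l, ℂ[[t]])` be the formal exponential
deformation, `γ̂(g) = exp(t·α(φ(g)))·ρ(g)`, and let `ρ_p : G → GL(l, ℂ[ℤᵐ])` be given by
`ρ_p(g) = p(φ(g))·ρ(g)`.  Then for every bounded complex `C_*` of f.g. free right
`ℤ[G]`-modules and every `k`, the dimension over `ℂ((t)) = Frac(ℂ[[t]])` of
`H_k(C_* ⊗_{γ̂} ℂ((t))^l)` equals `b_k(C_*, ρ; p)`, the dimension over `Frac(ℂ[ℤᵐ])` of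
`H_k(C_* ⊗_{ρ_p} {ℂ[ℤᵐ]}^l)`. -/
theorem betti_formal_exponential_deformation
    {G : Type} [Group G] {n m l : ℕ}
    (φ : G →* Multiplicative (Fin n → ℤ)) (hφ : Function.Surjective φ)
    (ρ : G →* GL (Fin l) ℂ)
    (α : (Fin n → ℤ) →+ ℂ)
    (p : (Fin n → ℤ) →+ (Fin m → ℤ)) (hp : Function.Surjective p)
    (αt : (Fin m → ℤ) →+ ℂ) (hαt : Function.Injective αt)
    (hfact : α = αt.comp p)
    (γ : G →* GL (Fin l) (PowerSeries ℂ))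
    (hγ : ∀ g : G, (γ g : Matrix (Fin l) (Fin l) (PowerSeries ℂ)) =
      expPS (α (Multiplicative.toAdd (φ g))) •
        ((ρ g : Matrix (Fin l) (Fin l) ℂ).map ⇑(PowerSeries.C (R := ℂ))))
    (ρp : G →* GL (Fin l) (AddMonoidAlgebra ℂ (Fin m → ℤ)))
    (hρp : ∀ g : G, (ρp g : Matrix (Fin l) (Fin l) (AddMonoidAlgebra ℂ (Fin m → ℤ))) =
      AddMonoidAlgebra.single (p (Multiplicative.toAdd (φ g))) (1 : ℂ) •
        ((ρ g : Matrix (Fin l) (Fin l) ℂ).map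
          ⇑(algebraMap ℂ (AddMonoidAlgebra ℂ (Fin m → ℤ)))))
    (C : FinFreeChainComplex (MonoidAlgebra ℤ G)) (k : ℕ) :
    reprBetti C γ k = reprBetti C ρp k :=
  betti_formal_exponential_deformation_general φ ρ α p αt hαt hfact γ hγ ρp hρp C k
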